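/- Let X = WH with W ∈ ℝ_+^{m×r}, H ∈ ℝ_+^{r×n}, r = rank(X), columns of H in the simplex, and H sufficiently scattered (SSC1 and SSC2). If (WQ^{-1}, QH) is another feasible factorization (WQ^{-1} ≥ 0, QH column-stochastic nonnegative) with det(QH(QH)^T) = det(HH^T), then Q is a permutation matrix. -/

import Mathlib

open Matrix

/-- Conic hull of the columns of a matrix `M`. -/
def coneOf {r n : ℕ} (M : Matrix (Fin r) (Fin n) ℝ) : Set (Fin r → ℝ) :=
  {y | ∃ c : Fin n → ℝ, (∀ j, 0 ≤ c j) ∧ y = M.mulVec c}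

/-- `Q` is a permutation matrix. -/
def IsPermMatrix {r : ℕ} (Q : Matrix (Fin r) (Fin r) ℝ) : Prop :=
  ∃ σ : Equiv.Perm (Fin r), ∀ i j, Q i j = if σ j = i then 1 else 0

/-!
Feasibility of `QH` gives `Q` unit column sums, and the volume condition gives `det Q = ±1`.
Since `QH ≥ 0`, every row `q` of `Q` is nonnegative on `cone(H) ⊇ C`, and testing `q` against
`‖q‖₂ e - q ∈ C` shows `‖q‖₂ ≤ eᵀq`. Hadamard's inequality for `QQᵀ` and AM–GM for the row sums,
which add up to `r`, then leave no slack: every row sum is `1`, so `tr(QQᵀ) ≤ r` while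
`det(QQᵀ) = 1`, which forces `QQᵀ = I`. Finally `cone(H) = Qᵀ cone(QH) ⊆ cone(Qᵀ)` with `Qᵀ`
orthogonal, so SSC2 makes `Qᵀ`, hence `Q`, a permutation matrix.
-/

theorem eq_one_of_sum_le_card_of_one_le_prod {ι : Type*} [Fintype ι] {f : ι → ℝ}
    (h0 : ∀ i, 0 ≤ f i) (hsum : ∑ i, f i ≤ Fintype.card ι) (hprod : 1 ≤ ∏ i, f i) (i : ι) :
    f i = 1 := by
  have hpos : ∀ j, 0 < f j := fun j => (h0 j).lt_of_ne fun hj => by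
    rw [Finset.prod_eq_zero (Finset.mem_univ j) hj.symm] at hprod
    linarith
  have hgap : ∀ j, 0 ≤ f j - 1 - Real.log (f j) := fun j => by
    linarith [Real.log_le_sub_one_of_pos (hpos j)]
  have hgap_sum : ∑ j, (f j - 1 - Real.log (f j)) ≤ 0 := by
    have hlog : 0 ≤ ∑ j, Real.log (f j) := by
      rw [← Real.log_prod fun j _ => (hpos j).ne']
      exact Real.log_nonneg hprod
    simp only [Finset.sum_sub_distrib, Finset.sum_const, Finset.card_univ, nsmul_one]
    linarith
  have hi : f i - 1 - Real.log (f i) = 0 :=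
    (Finset.sum_eq_zero_iff_of_nonneg fun j _ => hgap j).mp
      (le_antisymm hgap_sum (Finset.sum_nonneg fun j _ => hgap j)) i (Finset.mem_univ i)
  by_contra hne
  linarith [Real.log_lt_sub_one_of_pos (hpos i) hne]

theorem prod_le_one_of_sum_le_card {ι : Type*} [Fintype ι] {f : ι → ℝ}
    (h0 : ∀ i, 0 ≤ f i) (hsum : ∑ i, f i ≤ Fintype.card ι) : ∏ i, f i ≤ 1 := by
  by_contra! h
  have hone : ∏ i, f i = 1 := Finset.prod_eq_one fun i _ =>
    eq_one_of_sum_le_card_of_one_le_prod h0 hsum h.le i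
  linarith

theorem abs_le_sqrt_sum_sq {ι : Type*} [Fintype ι] (q : ι → ℝ) (j : ι) :
    |q j| ≤ √(∑ k, q k ^ 2) :=
  Real.abs_le_sqrt (Finset.single_le_sum (fun k _ => sq_nonneg (q k)) (Finset.mem_univ j))

theorem abs_sum_le_card_mul_sqrt_sum_sq {ι : Type*} [Fintype ι] (q : ι → ℝ) :
    |∑ j, q j| ≤ Fintype.card ι * √(∑ k, q k ^ 2) :=
  calc |∑ j, q j| ≤ ∑ j, |q j| := Finset.abs_sum_le_sum_abs _ _
    _ ≤ ∑ _j : ι, √(∑ k, q k ^ 2) := Finset.sum_le_sum fun j _ => abs_le_sqrt_sum_sq q j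
    _ = Fintype.card ι * √(∑ k, q k ^ 2) := by simp

namespace Matrix

section Square

variable {n : Type*} [Fintype n] [DecidableEq n]

theorem PosSemidef.det_le_one_of_trace_le_card {A : Matrix n n ℝ} (hA : A.PosSemidef)
    (htr : A.trace ≤ Fintype.card n) : A.det ≤ 1 := by
  rw [hA.isHermitian.det_eq_prod_eigenvalues]
  exact_mod_cast prod_le_one_of_sum_le_card hA.eigenvalues_nonneg
    (by simpa [hA.isHermitian.trace_eq_sum_eigenvalues] using htr)

theorem PosSemidef.eq_one_of_trace_le_card_of_one_le_det {A : Matrix n n ℝ} (hA : A.PosSemidef)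
    (htr : A.trace ≤ Fintype.card n) (hdet : 1 ≤ A.det) : A = 1 := by
  have heig : ∀ i, hA.isHermitian.eigenvalues i = 1 :=
    eq_one_of_sum_le_card_of_one_le_prod hA.eigenvalues_nonneg
      (by simpa [hA.isHermitian.trace_eq_sum_eigenvalues] using htr)
      (by simpa [hA.isHermitian.det_eq_prod_eigenvalues] using hdet)
  have hdiag : (RCLike.ofReal ∘ hA.isHermitian.eigenvalues : n → ℝ) = fun _ => 1 :=
    funext fun i => by simp [heig i]
  rw [hA.isHermitian.spectral_theorem, hdiag, diagonal_one, map_one]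

theorem PosDef.det_le_prod_diag {A : Matrix n n ℝ} (hA : A.PosDef) : A.det ≤ ∏ i, A i i := by
  set D : Matrix n n ℝ := diagonal fun i => (√(A i i))⁻¹
  have hscale : ∀ i, (√(A i i))⁻¹ * A i i * (√(A i i))⁻¹ = 1 := fun i => by
    rw [← div_eq_inv_mul, div_mul_eq_mul_div, ← div_eq_mul_inv, div_div, ← sq,
      Real.sq_sqrt hA.diag_pos.le, div_self hA.diag_pos.ne']
  have hnormal : (D * A * Dᴴ).PosSemidef := hA.posSemidef.mul_mul_conjTranspose_same D
  have hunit : (D * A * Dᴴ).trace = Fintype.card n := by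
    simp [D, trace, diagonal_mul, mul_diagonal, hscale]
  calc A.det = (D * A * Dᴴ).det * ∏ i, A i i := by
        have hprod : (∏ i, √(A i i))⁻¹ * (∏ i, A i i) * (∏ i, √(A i i))⁻¹ = 1 := by
          rw [← Finset.prod_inv_distrib, ← Finset.prod_mul_distrib, ← Finset.prod_mul_distrib]
          exact Finset.prod_eq_one fun i _ => hscale i
        simp only [D, det_mul, diagonal_conjTranspose, det_diagonal, star_trivial,
          Finset.prod_inv_distrib]
        linear_combination (-A.det) * hprod
    _ ≤ 1 * ∏ i, A i i := by
        gcongr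
        · exact Finset.prod_nonneg fun i _ => hA.diag_pos.le
        · exact hnormal.det_le_one_of_trace_le_card hunit.le
    _ = ∏ i, A i i := one_mul _

theorem mul_transpose_eq_one_of_sqrt_sum_sq_le_sum {Q : Matrix n n ℝ} (hdet : Q.det ^ 2 = 1)
    (hrow : ∀ i, √(∑ j, Q i j ^ 2) ≤ ∑ j, Q i j)
    (hsum : ∑ i, ∑ j, Q i j ≤ Fintype.card n) : Q * Qᵀ = 1 := by
  have hQ : IsUnit Q :=
    (isUnit_iff_isUnit_det Q).mpr (isUnit_iff_ne_zero.mpr fun h => by simp [h] at hdet)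
  have hG : (Q * Qᵀ).PosDef := by
    simpa using PosDef.mul_conjTranspose_self Q (vecMul_injective_of_isUnit hQ)
  have hGdiag : ∀ i, (Q * Qᵀ) i i = √(∑ j, Q i j ^ 2) ^ 2 := fun i => by
    rw [Real.sq_sqrt (Finset.sum_nonneg fun j _ => sq_nonneg _)]
    simp [mul_apply, sq]
  have hGdet : (Q * Qᵀ).det = 1 := by rw [det_mul, det_transpose, ← sq, hdet]
  have hrowsum_nonneg : ∀ i, 0 ≤ ∑ j, Q i j := fun i => (Real.sqrt_nonneg _).trans (hrow i)
  have hprod : 1 ≤ (∏ i, ∑ j, Q i j) ^ 2 := calc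
    1 = (Q * Qᵀ).det := hGdet.symm
    _ ≤ ∏ i, (Q * Qᵀ) i i := hG.det_le_prod_diag
    _ = (∏ i, √(∑ j, Q i j ^ 2)) ^ 2 := by simp_rw [hGdiag, Finset.prod_pow]
    _ ≤ (∏ i, ∑ j, Q i j) ^ 2 := by
      gcongr with i
      exact hrow i
  have hrowsum : ∀ i, ∑ j, Q i j = 1 :=
    eq_one_of_sum_le_card_of_one_le_prod hrowsum_nonneg hsum
      (by nlinarith [Finset.prod_nonneg fun i (_ : i ∈ Finset.univ) => hrowsum_nonneg i])
  refine hG.posSemidef.eq_one_of_trace_le_card_of_one_le_det ?_ hGdet.ge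
  calc (Q * Qᵀ).trace = ∑ i, √(∑ j, Q i j ^ 2) ^ 2 := by simp only [trace, diag, hGdiag]
    _ ≤ ∑ _i : n, (1 : ℝ) ^ 2 := by
      gcongr with i
      exact (hrow i).trans (hrowsum i).le
    _ = Fintype.card n := by simp

end Square

theorem vecMul_injective_of_rank_eq_card {K m n : Type*} [Field K] [Fintype m] [Fintype n]
    {A : Matrix m n K} (h : A.rank = Fintype.card m) : Function.Injective A.vecMul := by
  rw [vecMul_injective_iff, linearIndependent_iff_card_eq_finrank_span, ← h,
    rank_eq_finrank_span_row]
  rfl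

section FullRowRank

variable {m n : Type*} [Fintype m] {H : Matrix m n ℝ}

theorem sq_det_eq_one_of_det_gram_eq [Fintype n] [DecidableEq m]
    (hH : Function.Injective H.vecMul) {Q : Matrix m m ℝ}
    (h : ((Q * H) * (Q * H)ᵀ).det = (H * Hᵀ).det) : Q.det ^ 2 = 1 := by
  have hpos : 0 < (H * Hᵀ).det := by simpa using (PosDef.mul_conjTranspose_self H hH).det_pos
  have hgram : ((Q * H) * (Q * H)ᵀ).det = Q.det ^ 2 * (H * Hᵀ).det := by
    rw [transpose_mul, Matrix.mul_assoc, ← Matrix.mul_assoc H, ← Matrix.mul_assoc, det_mul,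
      det_mul, det_transpose]
    ring
  rw [hgram] at h
  exact mul_right_cancel₀ hpos.ne' (h.trans (one_mul _).symm)

theorem sum_apply_eq_one_of_vecMul_injective (hH : Function.Injective H.vecMul)
    {Q : Matrix m m ℝ} (hcol : ∀ j, ∑ i, H i j = 1) (hQHcol : ∀ j, ∑ i, (Q * H) i j = 1)
    (j : m) : ∑ i, Q i j = 1 := by
  have key : (1 ᵥ* Q) ᵥ* H = 1 ᵥ* H := by
    ext k
    rw [vecMul_vecMul]
    simpa [vecMul, dotProduct, hcol] using hQHcol k
  simpa [vecMul, dotProduct] using congrFun (hH key) j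

end FullRowRank

end Matrix

/-- The cone `C` of condition SSC1. -/
def ssc1Cone (r : ℕ) : Set (Fin r → ℝ) :=
  {x | (∀ i, 0 ≤ x i) ∧ Real.sqrt ((r : ℝ) - 1) * Real.sqrt (∑ i, (x i) ^ 2) ≤ ∑ i, x i}

theorem sqrt_sum_sq_sub_mem_ssc1Cone {r : ℕ} (q : Fin r → ℝ) :
    (fun j => √(∑ k, q k ^ 2) - q j) ∈ ssc1Cone r := by
  set t := √(∑ k, q k ^ 2)
  set s := ∑ k, q k
  have ht : t ^ 2 = ∑ k, q k ^ 2 := Real.sq_sqrt (Finset.sum_nonneg fun k _ => sq_nonneg (q k))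
  have hs : s ≤ r * t := by simpa using (le_abs_self s).trans (abs_sum_le_card_mul_sqrt_sum_sq q)
  refine ⟨fun j => sub_nonneg.mpr ((le_abs_self _).trans (abs_le_sqrt_sum_sq q j)), ?_⟩
  have hsum : ∑ j, (t - q j) = r * t - s := by simp [Finset.sum_sub_distrib, s]
  have hsq : ∑ j, (t - q j) ^ 2 = r * t ^ 2 - 2 * t * s + t ^ 2 := by
    simp only [sub_sq, Finset.sum_add_distrib, Finset.sum_sub_distrib, ← Finset.mul_sum, ← ht]
    simp [s]
  rw [hsum, ← Real.sqrt_mul' _ (Finset.sum_nonneg fun j _ => sq_nonneg _), hsq]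
  -- `(r t - s)² - (r - 1)(r t² - 2 t s + t²) = (t - s)²`
  calc √((r - 1) * (r * t ^ 2 - 2 * t * s + t ^ 2)) ≤ √((r * t - s) ^ 2) :=
        Real.sqrt_le_sqrt (by nlinarith [sq_nonneg (t - s)])
    _ = r * t - s := Real.sqrt_sq (by linarith)

theorem sqrt_sum_sq_le_sum_of_dual_ssc1Cone {r : ℕ} {q : Fin r → ℝ}
    (hq : ∀ x ∈ ssc1Cone r, 0 ≤ q ⬝ᵥ x) : √(∑ k, q k ^ 2) ≤ ∑ k, q k := by
  set t := √(∑ k, q k ^ 2)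
  set s := ∑ k, q k
  have ht : t ^ 2 = ∑ k, q k ^ 2 := Real.sq_sqrt (Finset.sum_nonneg fun k _ => sq_nonneg (q k))
  have hdot : q ⬝ᵥ (fun j => t - q j) = t * s - t ^ 2 := by
    simp only [dotProduct, mul_sub, Finset.sum_sub_distrib, ← Finset.sum_mul, ht, sq, s]
    ring
  have hts : 0 ≤ t * (s - t) := by
    rw [mul_sub, ← sq, ← hdot]
    exact hq _ (sqrt_sum_sq_sub_mem_ssc1Cone q)
  have hs : -(r * t) ≤ s := by simpa using (abs_le.mp (abs_sum_le_card_mul_sqrt_sum_sq q)).1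
  have ht0 : 0 ≤ t := Real.sqrt_nonneg _
  rcases ht0.eq_or_lt with h0 | hpos
  · rw [← h0, mul_zero, neg_zero] at hs
    rwa [← h0]
  · nlinarith

theorem dotProduct_nonneg_of_mem_coneOf {r n : ℕ} {H : Matrix (Fin r) (Fin n) ℝ}
    {q y : Fin r → ℝ} (hq : 0 ≤ q ᵥ* H) (hy : y ∈ coneOf H) : 0 ≤ q ⬝ᵥ y := by
  obtain ⟨c, hc, rfl⟩ := hy
  rw [dotProduct_mulVec]
  exact dotProduct_nonneg_of_nonneg hq hc

theorem coneOf_mul_subset {r k n : ℕ} (M : Matrix (Fin r) (Fin k) ℝ)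
    {C : Matrix (Fin k) (Fin n) ℝ} (hC : ∀ i j, 0 ≤ C i j) : coneOf (M * C) ⊆ coneOf M := by
  rintro _ ⟨c, hc, rfl⟩
  exact ⟨C *ᵥ c, fun i => dotProduct_nonneg_of_nonneg (hC i) hc, (mulVec_mulVec c M C).symm⟩

theorem IsPermMatrix.of_transpose {r : ℕ} {Q : Matrix (Fin r) (Fin r) ℝ}
    (h : IsPermMatrix Qᵀ) : IsPermMatrix Q := by
  obtain ⟨σ, hσ⟩ := h
  refine ⟨σ⁻¹, fun i j => ?_⟩
  rw [← transpose_apply Q, hσ j i]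
  simp [Equiv.eq_symm_apply, eq_comm]

theorem stmt18_general {m r n : ℕ}
    (W : Matrix (Fin m) (Fin r) ℝ) (H : Matrix (Fin r) (Fin n) ℝ)
    (hrank : (W * H).rank = r)
    (hcol : ∀ j, ∑ i, H i j = 1)
    (hSSC1 : {x : Fin r → ℝ | (∀ i, 0 ≤ x i) ∧
        Real.sqrt ((r : ℝ) - 1) * Real.sqrt (∑ i, (x i) ^ 2) ≤ ∑ i, x i} ⊆ coneOf H)
    (hSSC2 : ∀ O : Matrix (Fin r) (Fin r) ℝ, O * Oᵀ = 1 → coneOf H ⊆ coneOf O →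
      IsPermMatrix O)
    (Q : Matrix (Fin r) (Fin r) ℝ)
    (hQH0 : ∀ i j, 0 ≤ (Q * H) i j)
    (hQHcol : ∀ j, ∑ i, (Q * H) i j = 1)
    (hvol : ((Q * H) * (Q * H)ᵀ).det = (H * Hᵀ).det) :
    IsPermMatrix Q := by
  have hH : Function.Injective H.vecMul := vecMul_injective_of_rank_eq_card <|
    le_antisymm (rank_le_card_height H) (by simpa [hrank] using rank_mul_le_right W H)
  have hrow : ∀ i, √(∑ j, Q i j ^ 2) ≤ ∑ j, Q i j := fun i =>
    sqrt_sum_sq_le_sum_of_dual_ssc1Cone fun _ hx =>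
      dotProduct_nonneg_of_mem_coneOf (hQH0 i) (hSSC1 hx)
  have hsum : ∑ i, ∑ j, Q i j ≤ Fintype.card (Fin r) := by
    refine Finset.sum_comm.trans_le ?_
    simp [sum_apply_eq_one_of_vecMul_injective hH hcol hQHcol]
  have hQtQ : Qᵀ * Q = 1 := mul_eq_one_comm.mp <|
    mul_transpose_eq_one_of_sqrt_sum_sq_le_sum (sq_det_eq_one_of_det_gram_eq hH hvol) hrow hsum
  have hcone : coneOf H ⊆ coneOf Qᵀ := by
    simpa [← Matrix.mul_assoc, hQtQ] using coneOf_mul_subset Qᵀ hQH0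
  exact IsPermMatrix.of_transpose <| hSSC2 Qᵀ (by rwa [transpose_transpose]) hcone

theorem stmt18 {m r n : ℕ}
    (W : Matrix (Fin m) (Fin r) ℝ) (H : Matrix (Fin r) (Fin n) ℝ)
    (hW0 : ∀ i j, 0 ≤ W i j) (hH0 : ∀ i j, 0 ≤ H i j)
    (hrank : (W * H).rank = r)
    (hcol : ∀ j, ∑ i, H i j = 1)
    (hSSC1 : {x : Fin r → ℝ | (∀ i, 0 ≤ x i) ∧
        Real.sqrt ((r : ℝ) - 1) * Real.sqrt (∑ i, (x i) ^ 2) ≤ ∑ i, x i} ⊆ coneOf H)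
    (hSSC2 : ∀ O : Matrix (Fin r) (Fin r) ℝ, O * Oᵀ = 1 → coneOf H ⊆ coneOf O →
      IsPermMatrix O)
    (Q : Matrix (Fin r) (Fin r) ℝ) (hQ : IsUnit Q.det)
    (hWQ : ∀ i j, 0 ≤ (W * Q⁻¹) i j)
    (hQH0 : ∀ i j, 0 ≤ (Q * H) i j)
    (hQHcol : ∀ j, ∑ i, (Q * H) i j = 1)
    (hvol : ((Q * H) * (Q * H)ᵀ).det = (H * Hᵀ).det) :
    IsPermMatrix Q :=
  stmt18_general W H hrank hcol hSSC1 hSSC2 Q hQH0 hQHcol hvol
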